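/- Let G = (V, w) be a weighted graph and u, v distinct nodes with w(u,v) < 0. Define the fast score ν̂_f(u,v) = 2|w(u,v)| − min(‖w^(u)‖, ‖w^(v)‖) and the similarity score ν̂_s(u,v) = 2|w(u,v)| − (1/2)·Σ_{z∈V} |w(u,z) + w(v,z)|. If max(ν̂_f(u,v), ν̂_s(u,v)) > 0, then (u, v) is an antipolar pair, i.e., ν_G({u,v}) < 0, and hence every min-cut of G separates u and v. -/

import Mathlib

/-!
By complementation, a cut `S` that does not separate `u` and `v` may be assumed to contain both.
Moving `v` out of `S` changes the cut by `∑_{z ∈ S} w(v,z) - ∑_{z ∉ S} w(v,z)`; bounding each term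
by `|w(v,z)|` except the negative one at `z = u` bounds the change by `‖w⁽ᵛ⁾‖ - 2|w(u,v)|`, and the
same argument for `w(u,·) + w(v,·)` bounds the average change of moving `u` or `v` by `-ν̂_s(u,v)`.
So a positive score makes some separating cut strictly cheaper than every non-separating one.
-/

open Finset

variable {V : Type*}

/-- Cut capacity of a cut `S` in the weighted graph `(V, w)`:
`c(S) = Σ_{u ∈ S, v ∈ V \ S} w(u,v)`. -/
noncomputable def cutVal [Fintype V] [DecidableEq V] (w : V → V → ℝ) (S : Finset V) : ℝ :=
  ∑ u ∈ S, ∑ v ∈ Sᶜ, w u v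

/-- Minimum cut value `MC(G) = min_{S ⊆ V} c(S)` (cuts range over all subsets). -/
noncomputable def minCutVal [Fintype V] [DecidableEq V] (w : V → V → ℝ) : ℝ :=
  sInf (Set.range (cutVal w))

/-- `S` separates `X` iff `X ∩ S ∉ {∅, X}`. -/
def Separates [DecidableEq V] (S X : Finset V) : Prop :=
  X ∩ S ≠ ∅ ∧ X ∩ S ≠ X

/-- `X` is non-separable: no min-cut separates `X`. -/
def NonSepSet [Fintype V] [DecidableEq V] (w : V → V → ℝ) (X : Finset V) : Prop :=
  ∀ S : Finset V, cutVal w S = minCutVal w → ¬ Separates S X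

/-- `X` is weakly non-separable: some min-cut separates `X` and some min-cut does not. -/
def WeakNonSepSet [Fintype V] [DecidableEq V] (w : V → V → ℝ) (X : Finset V) : Prop :=
  (∃ S : Finset V, cutVal w S = minCutVal w ∧ Separates S X) ∧
  (∃ S : Finset V, cutVal w S = minCutVal w ∧ ¬ Separates S X)

/-- Non-separability index
`ν_G(X) = min_{S ⊆ V, S ⊖ X} c(S) − min_{S ⊆ V, ¬(S ⊖ X)} c(S)`. -/
noncomputable def nuIdx [Fintype V] [DecidableEq V] (w : V → V → ℝ) (X : Finset V) : ℝ :=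
  sInf (cutVal w '' {S : Finset V | Separates S X}) -
  sInf (cutVal w '' {S : Finset V | ¬ Separates S X})

lemma sum_sub_sum_compl_le [Fintype V] [DecidableEq V] {f : V → ℝ}
    {S T : Finset V} (hTS : T ⊆ S) (hT : ∀ z ∈ T, f z ≤ 0) :
    ∑ z ∈ S, f z - ∑ z ∈ Sᶜ, f z ≤ ∑ z, |f z| - 2 * ∑ z ∈ T, |f z| := by
  have hTabs : ∑ z ∈ T, f z = -∑ z ∈ T, |f z| := by
    rw [← Finset.sum_neg_distrib]
    exact Finset.sum_congr rfl fun z hz => by rw [abs_of_nonpos (hT z hz), neg_neg]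
  have hrest : ∑ z ∈ S \ T, f z ≤ ∑ z ∈ S \ T, |f z| :=
    Finset.sum_le_sum fun z _ => le_abs_self _
  have hcompl : -∑ z ∈ Sᶜ, f z ≤ ∑ z ∈ Sᶜ, |f z| := by
    rw [← Finset.sum_neg_distrib]
    exact Finset.sum_le_sum fun z _ => neg_le_abs _
  rw [← Finset.sum_sdiff hTS, ← Finset.sum_add_sum_compl S, ← Finset.sum_sdiff hTS]
  linarith

/-- The fast antipolarity score `ν̂_f(u,v)`. -/
def fastScore [Fintype V] (w : V → V → ℝ) (u v : V) : ℝ :=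
  2 * |w u v| - min (∑ z, |w u z|) (∑ z, |w v z|)

/-- The similarity antipolarity score `ν̂_s(u,v)`. -/
noncomputable def similarityScore [Fintype V] (w : V → V → ℝ) (u v : V) : ℝ :=
  2 * |w u v| - (1 / 2) * ∑ z, |w u z + w v z|

lemma separates_pair_iff [DecidableEq V] {S : Finset V} {u v : V} :
    Separates S {u, v} ↔ ((u ∈ S ∧ v ∉ S) ∨ (v ∈ S ∧ u ∉ S)) := by
  rw [Separates, Ne, Ne, Finset.inter_eq_left, Finset.eq_empty_iff_forall_notMem]
  simp only [Finset.insert_subset_iff, Finset.singleton_subset_iff, Finset.mem_inter,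
    Finset.mem_insert, Finset.mem_singleton]
  grind

section Cuts

variable [Fintype V] [DecidableEq V] {w : V → V → ℝ}

lemma cutVal_compl (hsymm : ∀ a b, w a b = w b a) (S : Finset V) :
    cutVal w Sᶜ = cutVal w S := by
  rw [cutVal, cutVal, compl_compl, Finset.sum_comm]
  simp only [hsymm]

lemma cutVal_erase (hsymm : ∀ a b, w a b = w b a) (hdiag : ∀ a, w a a = 0)
    {S : Finset V} {a : V} (ha : a ∈ S) :
    cutVal w (S.erase a) = cutVal w S + (∑ z ∈ S, w a z - ∑ z ∈ Sᶜ, w a z) := by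
  have hcompl : (S.erase a)ᶜ = insert a Sᶜ := by
    ext x
    by_cases hx : x = a <;> simp [hx, ha]
  have hinside : ∑ x ∈ S.erase a, w x a = ∑ z ∈ S, w a z := by
    rw [← Finset.sum_erase_add S _ ha, hdiag, add_zero]
    exact Finset.sum_congr rfl fun x _ => hsymm x a
  rw [cutVal, cutVal, hcompl, ← Finset.add_sum_erase S _ ha]
  simp only [Finset.sum_insert (Finset.notMem_compl.mpr ha), Finset.sum_add_distrib, hinside]
  ring

end Cuts

section MovingANode

variable [Fintype V] [DecidableEq V] {w : V → V → ℝ} {u v : V} {S : Finset V}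

lemma cutVal_erase_le (hsymm : ∀ a b, w a b = w b a) (hdiag : ∀ a, w a a = 0)
    (hw : w u v < 0) (hu : u ∈ S) (hv : v ∈ S) :
    cutVal w (S.erase v) ≤ cutVal w S + (∑ z, |w v z| - 2 * |w u v|) := by
  have hbound := sum_sub_sum_compl_le (f := w v) (T := {u})
    (Finset.singleton_subset_iff.mpr hu) (by simpa [hsymm v u] using hw.le)
  rw [cutVal_erase hsymm hdiag hv]
  simpa [hsymm v u] using hbound

lemma cutVal_erase_add_cutVal_erase_le (hsymm : ∀ a b, w a b = w b a)
    (hdiag : ∀ a, w a a = 0) (huv : u ≠ v) (hw : w u v < 0) (hu : u ∈ S) (hv : v ∈ S) :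
    cutVal w (S.erase u) + cutVal w (S.erase v) ≤
      2 * cutVal w S + (∑ z, |w u z + w v z| - 4 * |w u v|) := by
  have hbound := sum_sub_sum_compl_le (f := fun z => w u z + w v z) (T := {u, v})
    (Finset.insert_subset hu (Finset.singleton_subset_iff.mpr hv))
    (by simp [hdiag, hsymm v u, hw.le])
  have hpair : ∑ z ∈ {u, v}, |w u z + w v z| = 2 * |w u v| := by
    rw [Finset.sum_pair huv, hdiag, hdiag, hsymm v u, zero_add, add_zero, two_mul]
  rw [hpair] at hbound
  simp only [Finset.sum_add_distrib] at hbound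
  rw [cutVal_erase hsymm hdiag hu, cutVal_erase hsymm hdiag hv]
  linarith

end MovingANode

section MinCuts

variable [Fintype V] [DecidableEq V] {w : V → V → ℝ} {X : Finset V}

lemma nuIdx_neg_of_forall_exists_separates_lt
    (h : ∀ S, ¬ Separates S X → ∃ S', Separates S' X ∧ cutVal w S' < cutVal w S) :
    nuIdx w X < 0 := by
  have hne : (cutVal w '' {S : Finset V | ¬ Separates S X}).Nonempty :=
    ⟨cutVal w ∅, ∅, fun hsep => hsep.1 (Finset.inter_empty X), rfl⟩
  obtain ⟨S, hS, hSinf⟩ := hne.csInf_mem (Set.toFinite _)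
  obtain ⟨S', hS', hlt⟩ := h S hS
  have hle : sInf (cutVal w '' {S : Finset V | Separates S X}) ≤ cutVal w S' :=
    csInf_le (Set.toFinite _).bddBelow ⟨S', hS', rfl⟩
  rw [nuIdx, ← hSinf]
  linarith

lemma separates_of_cutVal_eq_minCutVal
    (h : ∀ S, ¬ Separates S X → ∃ S', Separates S' X ∧ cutVal w S' < cutVal w S)
    {S : Finset V} (hS : cutVal w S = minCutVal w) : Separates S X := by
  by_contra hsep
  obtain ⟨S', -, hlt⟩ := h S hsep
  have hmin : minCutVal w ≤ cutVal w S' := csInf_le (Set.finite_range _).bddBelow ⟨S', rfl⟩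
  linarith

end MinCuts

lemma exists_separates_cutVal_le [Fintype V] [DecidableEq V] {w : V → V → ℝ}
    (hsymm : ∀ a b, w a b = w b a) (hdiag : ∀ a, w a a = 0) {u v : V} (huv : u ≠ v)
    (hw : w u v < 0) {S : Finset V} (hS : ¬ Separates S {u, v}) :
    ∃ S', Separates S' {u, v} ∧
      cutVal w S' ≤ cutVal w S - max (fastScore w u v) (similarityScore w u v) := by
  wlog hu : u ∈ S generalizing S
  · have hSc : ¬ Separates Sᶜ {u, v} := by
      simp only [separates_pair_iff, Finset.mem_compl] at hS ⊢
      tauto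
    obtain ⟨S', hS', hle⟩ := this hSc (Finset.mem_compl.mpr hu)
    exact ⟨S', hS', by rwa [cutVal_compl hsymm] at hle⟩
  have hv : v ∈ S := by
    by_contra hv
    exact hS (separates_pair_iff.mpr (Or.inl ⟨hu, hv⟩))
  have hsep_u : Separates (S.erase u) {u, v} :=
    separates_pair_iff.mpr (Or.inr ⟨Finset.mem_erase.mpr ⟨huv.symm, hv⟩, Finset.notMem_erase u S⟩)
  have hsep_v : Separates (S.erase v) {u, v} :=
    separates_pair_iff.mpr (Or.inl ⟨Finset.mem_erase.mpr ⟨huv, hu⟩, Finset.notMem_erase v S⟩)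
  have hmove_u := cutVal_erase_le hsymm hdiag (by rwa [hsymm]) hv hu
  have hmove_v := cutVal_erase_le hsymm hdiag hw hu hv
  have hmove_both := cutVal_erase_add_cutVal_erase_le hsymm hdiag huv hw hu hv
  rw [hsymm v u] at hmove_u
  set a := cutVal w (S.erase u)
  set b := cutVal w (S.erase v)
  have hfast : min a b ≤ cutVal w S - fastScore w u v := by
    rw [fastScore]
    rcases min_cases (∑ z, |w u z|) (∑ z, |w v z|) with ⟨hmin, -⟩ | ⟨hmin, -⟩ <;> rw [hmin]
    · linarith [min_le_left a b]
    · linarith [min_le_right a b]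
  have hsim : min a b ≤ cutVal w S - similarityScore w u v := by
    rw [similarityScore]
    linarith [min_le_left a b, min_le_right a b]
  have hmax := max_le (le_sub_comm.mp hfast) (le_sub_comm.mp hsim)
  rcases min_choice a b with hmin | hmin
  · exact ⟨S.erase u, hsep_u, by linarith⟩
  · exact ⟨S.erase v, hsep_v, by linarith⟩

theorem statement_17_general [Fintype V] [DecidableEq V]
    (w : V → V → ℝ) (hsymm : ∀ a b, w a b = w b a) (hdiag : ∀ a, w a a = 0)
    (u v : V) (huv : u ≠ v) (hw : w u v < 0)
    (hpos : 0 < max (2 * |w u v| - min (∑ z, |w u z|) (∑ z, |w v z|))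
                    (2 * |w u v| - (1 / 2) * ∑ z, |w u z + w v z|)) :
    nuIdx w {u, v} < 0 ∧
    ∀ S : Finset V, cutVal w S = minCutVal w →
      ((u ∈ S ∧ v ∉ S) ∨ (v ∈ S ∧ u ∉ S)) := by
  have hstrict : ∀ S, ¬ Separates S {u, v} →
      ∃ S', Separates S' {u, v} ∧ cutVal w S' < cutVal w S := fun S hS => by
    obtain ⟨S', hS', hle⟩ := exists_separates_cutVal_le hsymm hdiag huv hw hS
    exact ⟨S', hS', by unfold fastScore similarityScore at hle; linarith⟩
  exact ⟨nuIdx_neg_of_forall_exists_separates_lt hstrict, fun S hS =>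
    separates_pair_iff.mp (separates_of_cutVal_eq_minCutVal hstrict hS)⟩

/-- for `w(u,v) < 0`, if `max(ν̂_f(u,v), ν̂_s(u,v)) > 0` where
`ν̂_f(u,v) = 2|w(u,v)| − min(‖w⁽ᵘ⁾‖, ‖w⁽ᵛ⁾‖)` and
`ν̂_s(u,v) = 2|w(u,v)| − ½ Σ_z |w(u,z) + w(v,z)|`, then `(u,v)` is an antipolar pair
(`ν_G({u,v}) < 0`) and every min-cut separates `u` and `v`. -/
theorem statement_17 [Fintype V] [DecidableEq V] [Nonempty V]
    (w : V → V → ℝ) (hsymm : ∀ a b, w a b = w b a) (hdiag : ∀ a, w a a = 0)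
    (u v : V) (huv : u ≠ v) (hw : w u v < 0)
    (hpos : 0 < max (2 * |w u v| - min (∑ z, |w u z|) (∑ z, |w v z|))
                    (2 * |w u v| - (1 / 2) * ∑ z, |w u z + w v z|)) :
    nuIdx w {u, v} < 0 ∧
    ∀ S : Finset V, cutVal w S = minCutVal w →
      ((u ∈ S ∧ v ∉ S) ∨ (v ∈ S ∧ u ∉ S)) :=
  statement_17_general w hsymm hdiag u v huv hw hpos
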